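/- With notation as in the affine Schubert variety setting, the fiber τ_b^{-1}(B) = {B + c ∈ Graff(k,n) : dim((B + c) ∩ (A_j + b)) ≥ j, j = 1,...,k} is contractible (indeed convex as a subset of the quotient ℝ^n/B). -/

import Mathlib

/-!
Two affine subspaces `p + U` and `q + W` meet exactly when `p - q ∈ U ⊔ W`, and then their
intersection has direction `U ⊓ W`. Since `dim(B ∩ A_j) ≥ j + 1 > 0`, the dimension conditions
therefore reduce to `c ∈ b + (B + A_j)` for all `j`: the fiber is an intersection of affine
subspaces containing `b`, so its image in `ℝⁿ/B` is convex, nonempty, hence contractible.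
-/

open Module

namespace AffineSubspace

variable {k V P : Type*} [Ring k] [AddCommGroup V] [Module k V] [AddTorsor V P]

theorem mk'_inf_mk'_nonempty_iff {p q : P} {U W : Submodule k V} :
    ((mk' p U ⊓ mk' q W : AffineSubspace k P) : Set P).Nonempty ↔ p -ᵥ q ∈ U ⊔ W := by
  constructor
  · rintro ⟨x, hxU, hxW⟩
    have hpx : p -ᵥ x ∈ U := by
      simpa using vsub_mem_direction (self_mem_mk' p U) hxU
    rw [← vsub_add_vsub_cancel p x q]
    exact Submodule.add_mem_sup hpx (mem_mk'.1 hxW)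
  · intro h
    obtain ⟨u, hu, w, hw, huw⟩ := Submodule.mem_sup.1 h
    refine ⟨-u +ᵥ p, mem_mk'.2 ?_, mem_mk'.2 ?_⟩
    · simpa using neg_mem hu
    · rwa [vadd_vsub_assoc, ← huw, neg_add_cancel_left]

theorem direction_mk'_inf_mk' {p q : P} {U W : Submodule k V}
    (h : ((mk' p U ⊓ mk' q W : AffineSubspace k P) : Set P).Nonempty) :
    (mk' p U ⊓ mk' q W).direction = U ⊓ W := by
  obtain ⟨x, hxU, hxW⟩ := h
  rw [direction_inf_of_mem hxU hxW, direction_mk', direction_mk']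

theorem succ_le_finrank_direction_mk'_inf_mk'_iff [Nontrivial k] {p q : P} {U W : Submodule k V} {m : ℕ} :
    m + 1 ≤ finrank k (mk' p U ⊓ mk' q W).direction ↔
      p -ᵥ q ∈ U ⊔ W ∧ m + 1 ≤ finrank k ↥(U ⊓ W) := by
  constructor
  · intro h
    have hne : ((mk' p U ⊓ mk' q W : AffineSubspace k P) : Set P).Nonempty := by
      by_contra hempty
      rw [Set.not_nonempty_iff_eq_empty, coe_eq_bot_iff] at hempty
      rw [hempty, direction_bot] at h
      simp at h
    exact ⟨mk'_inf_mk'_nonempty_iff.1 hne, direction_mk'_inf_mk' hne ▸ h⟩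
  · rintro ⟨hpq, h⟩
    rwa [direction_mk'_inf_mk' (mk'_inf_mk'_nonempty_iff.2 hpq)]

end AffineSubspace

open AffineSubspace

theorem setOf_forall_succ_le_finrank_direction_eq_iInter {k V : Type*} [Ring k] [Nontrivial k]
    [AddCommGroup V] [Module k V] {ι : Type*} (d : ι → ℕ) (A : ι → Submodule k V)
    (B : Submodule k V) (b : V) (hB : ∀ j, d j + 1 ≤ finrank k ↥(B ⊓ A j)) :
    {c : V | ∀ j, d j + 1 ≤ finrank k (mk' c B ⊓ mk' b (A j)).direction} =
      ⋂ j, (mk' b (B ⊔ A j) : Set V) := by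
  ext c
  simp only [Set.mem_ofPred_eq, Set.mem_iInter, SetLike.mem_coe, mem_mk',
    succ_le_finrank_direction_mk'_inf_mk'_iff, hB, and_true]

theorem fiber_convex_contractible_general (n k : ℕ)
    (A : Fin k → Submodule ℝ (Fin n → ℝ))
    (B : Submodule ℝ (Fin n → ℝ)) (b : Fin n → ℝ)
    (hB : ∀ j : Fin k, (j : ℕ) + 1 ≤ finrank ℝ ↥(B ⊓ A j)) :
    Convex ℝ (B.mkQ '' {c : Fin n → ℝ | ∀ j : Fin k,
        (j : ℕ) + 1 ≤
          finrank ℝ ↥(AffineSubspace.mk' c B ⊓ AffineSubspace.mk' b (A j)).direction}) ∧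
    ContractibleSpace ↥(B.mkQ '' {c : Fin n → ℝ | ∀ j : Fin k,
        (j : ℕ) + 1 ≤
          finrank ℝ ↥(AffineSubspace.mk' c B ⊓ AffineSubspace.mk' b (A j)).direction}) := by
  rw [setOf_forall_succ_le_finrank_direction_eq_iInter (fun j : Fin k => (j : ℕ)) A B b hB]
  have hconv : Convex ℝ (B.mkQ '' ⋂ j, (mk' b (B ⊔ A j) : Set (Fin n → ℝ))) :=
    (convex_iInter fun j => (mk' b (B ⊔ A j)).convex).linear_image B.mkQ
  have hb : b ∈ ⋂ j, (mk' b (B ⊔ A j) : Set (Fin n → ℝ)) :=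
    Set.mem_iInter.2 fun j => self_mem_mk' b _
  exact ⟨hconv, hconv.contractibleSpace ⟨_, Set.mem_image_of_mem _ hb⟩⟩

/-- With `A₁ ⊆ ⋯ ⊆ A_k` a flag of linear subspaces of `ℝⁿ`, `b ∈ ℝⁿ`, and
`B` a linear subspace with `dim(B ∩ A_j) ≥ j` for all `j`, the fiber
`τ_b⁻¹(B) = {B + c : dim((B+c) ∩ (A_j+b)) ≥ j, j = 1,…,k}` of the deaffine map over `B` —
identified via `c ↦ c mod B` with the subset `C(B,b)/B` of `ℝⁿ/B` — is convex and
contractible. -/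
theorem fiber_convex_contractible (n k : ℕ)
    (A : Fin k → Submodule ℝ (Fin n → ℝ)) (hA : Monotone A)
    (B : Submodule ℝ (Fin n → ℝ)) (b : Fin n → ℝ)
    (hB : ∀ j : Fin k, (j : ℕ) + 1 ≤ finrank ℝ ↥(B ⊓ A j)) :
    Convex ℝ (B.mkQ '' {c : Fin n → ℝ | ∀ j : Fin k,
        (j : ℕ) + 1 ≤
          finrank ℝ ↥(AffineSubspace.mk' c B ⊓ AffineSubspace.mk' b (A j)).direction}) ∧
    ContractibleSpace ↥(B.mkQ '' {c : Fin n → ℝ | ∀ j : Fin k,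
        (j : ℕ) + 1 ≤
          finrank ℝ ↥(AffineSubspace.mk' c B ⊓ AffineSubspace.mk' b (A j)).direction}) :=
  fiber_convex_contractible_general n k A B b hB
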